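/- Let f : R^N → R be twice continuously differentiable with bounded second derivatives on a ball around x, let ω_n = (2π/T)κ_n with distinct positive integers κ_n, and sin(ωt) := (sin(ω_n t))_{n=1}^N. Then for each n, (1/T)∫₀ᵀ (2/a) f(x + a sin(ωt)) sin(ω_n t) dt = ∂f/∂x_n(x) + O(a) as a → 0⁺, where the O(a) constant depends only on the bound on the second derivatives of f. -/

import Mathlib

/-!
Write the probe as `x + a • sin(ωt)`. To second order, `f (x + a • sin(ωt))` equals
`f x + a ∑ᵢ ∂ᵢf(x) sin(ωᵢt)` up to `C a²`, by the mean value inequality applied to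
`f - f'(x)`, whose derivative is `C`-Lipschitz on the ball. Averaging against `(2 / a) sin(ωₙt)`
over one period kills the constant term (zero mean) and picks `∂ₙf(x)` out of the linear term,
since `(1/T) ∫₀ᵀ sin(ωᵢt) sin(ωₙt) dt = δᵢₙ / 2` for distinct positive integer multiples `ωᵢ` of
`2π / T`. The remainder then contributes at most `(2 / a) C a² = 2 C a`.
-/

open Real intervalIntegral

section Orthogonality

variable {T : ℝ}

theorem integral_cos_two_pi_div_mul_eq_zero (hT : T ≠ 0) {m : ℤ} (hm : m ≠ 0) :
    ∫ t in (0 : ℝ)..T, cos (2 * π / T * m * t) = 0 := by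
  have hc : 2 * π / T * m ≠ 0 := mul_ne_zero (div_ne_zero (by positivity) hT) (mod_cast hm)
  have hperiod : 2 * π / T * m * T = (2 * m : ℤ) * π := by push_cast; field_simp
  rw [integral_comp_mul_left cos hc, mul_zero, integral_cos, hperiod, sin_int_mul_pi, sin_zero,
    sub_zero, smul_zero]

theorem integral_sin_two_pi_div_mul_eq_zero (hT : T ≠ 0) (m : ℕ) :
    ∫ t in (0 : ℝ)..T, sin (2 * π / T * m * t) = 0 := by
  rcases eq_or_ne m 0 with rfl | hm
  · simp
  have hc : 2 * π / T * m ≠ 0 := mul_ne_zero (div_ne_zero (by positivity) hT) (mod_cast hm)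
  have hperiod : 2 * π / T * m * T = m * (2 * π) := by field_simp
  rw [integral_comp_mul_left sin hc, mul_zero, integral_sin, hperiod, cos_nat_mul_two_pi, cos_zero,
    sub_self, smul_zero]

theorem integral_sin_mul_sin_two_pi_div (hT : T ≠ 0) (k : ℕ) {l : ℕ} (hl : 0 < l) :
    ∫ t in (0 : ℝ)..T, sin (2 * π / T * k * t) * sin (2 * π / T * l * t) =
      if k = l then T / 2 else 0 := by
  have hprod : ∀ t, sin (2 * π / T * k * t) * sin (2 * π / T * l * t) =
      (cos (2 * π / T * ((k - l : ℤ) : ℝ) * t) - cos (2 * π / T * ((k + l : ℤ) : ℝ) * t)) / 2 := by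
    intro t
    rw [eq_div_iff two_ne_zero, mul_comm, ← mul_assoc, two_mul_sin_mul_sin]
    push_cast
    ring_nf
  have hsum : ((k : ℤ) + l) ≠ 0 := by positivity
  simp_rw [hprod]
  rw [integral_div, integral_sub (Continuous.intervalIntegrable (by fun_prop) _ _)
    (Continuous.intervalIntegrable (by fun_prop) _ _),
    integral_cos_two_pi_div_mul_eq_zero hT hsum]
  split_ifs with hkl
  · simp [hkl]
  · rw [integral_cos_two_pi_div_mul_eq_zero hT (sub_ne_zero.mpr (mod_cast hkl))]
    simp

end Orthogonality

section Taylor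

variable {E F : Type*} [NormedAddCommGroup E] [NormedSpace ℝ E] [NormedAddCommGroup F]
  [NormedSpace ℝ F] {f : E → F} {s : Set E} {C : ℝ}

theorem Convex.norm_fderiv_sub_le_of_norm_iteratedFDeriv_two_le (hs : Convex ℝ s)
    (hso : IsOpen s) (hf : ContDiffOn ℝ 2 f s) (hbound : ∀ z ∈ s, ‖iteratedFDeriv ℝ 2 f z‖ ≤ C)
    {x y : E} (hx : x ∈ s) (hy : y ∈ s) : ‖fderiv ℝ f y - fderiv ℝ f x‖ ≤ C * ‖y - x‖ := by
  have hdiff : ∀ z ∈ s, DifferentiableAt ℝ (fderiv ℝ f) z := fun z hz =>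
    ((hf.fderiv_of_isOpen hso (by norm_num)).differentiableOn one_ne_zero).differentiableAt
      (hso.mem_nhds hz)
  have hsecond : ∀ z ∈ s, ‖fderiv ℝ (fderiv ℝ f) z‖ ≤ C := fun z hz => by
    rw [← norm_iteratedFDeriv_one, norm_iteratedFDeriv_fderiv]
    exact hbound z hz
  exact hs.norm_image_sub_le_of_norm_fderiv_le hdiff hsecond hx hy

/-- The mean value inequality for `f - fderiv ℝ f x`, applied on `s ∩ closedBall x ‖y - x‖`
where its derivative is at most `C * ‖y - x‖`. -/
theorem Convex.norm_sub_sub_fderiv_le_of_norm_iteratedFDeriv_two_le (hs : Convex ℝ s)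
    (hso : IsOpen s) (hf : ContDiffOn ℝ 2 f s) (hbound : ∀ z ∈ s, ‖iteratedFDeriv ℝ 2 f z‖ ≤ C)
    {x y : E} (hx : x ∈ s) (hy : y ∈ s) :
    ‖f y - f x - fderiv ℝ f x (y - x)‖ ≤ C * ‖y - x‖ ^ 2 := by
  have hC : 0 ≤ C := (norm_nonneg _).trans (hbound x hx)
  set t := s ∩ Metric.closedBall x ‖y - x‖
  have hdiff : ∀ z ∈ t, DifferentiableAt ℝ f z := fun z hz =>
    (hf.differentiableOn (by norm_num)).differentiableAt (hso.mem_nhds hz.1)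
  have hlip : ∀ z ∈ t, ‖fderiv ℝ f z - fderiv ℝ f x‖ ≤ C * ‖y - x‖ := fun z hz =>
    (hs.norm_fderiv_sub_le_of_norm_iteratedFDeriv_two_le hso hf hbound hx hz.1).trans
      (mul_le_mul_of_nonneg_left (by simpa [dist_eq_norm] using hz.2) hC)
  have := (hs.inter (convex_closedBall x _)).norm_image_sub_le_of_norm_fderiv_le' hdiff hlip
    ⟨hx, Metric.mem_closedBall_self (norm_nonneg _)⟩ ⟨hy, by simp [dist_eq_norm]⟩
  rwa [mul_assoc, ← sq] at this

theorem norm_add_sub_sub_fderiv_le_of_mem_ball {x : E} {r : ℝ}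
    (hf : ContDiffOn ℝ 2 f (Metric.ball x r))
    (hbound : ∀ z ∈ Metric.ball x r, ‖iteratedFDeriv ℝ 2 f z‖ ≤ C) {v : E}
    (hv : x + v ∈ Metric.ball x r) : ‖f (x + v) - f x - fderiv ℝ f x v‖ ≤ C * ‖v‖ ^ 2 := by
  have hx : x ∈ Metric.ball x r := Metric.mem_ball_self (Metric.pos_of_mem_ball hv)
  simpa using (convex_ball x r).norm_sub_sub_fderiv_le_of_norm_iteratedFDeriv_two_le
    Metric.isOpen_ball hf hbound hx hv

end Taylor

/-- The dither `sin(ωt)` of the paper, with `ωᵢ = (2π / T) κᵢ`. -/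
noncomputable def dither {ι : Type*} (T : ℝ) (κ : ι → ℕ) (t : ℝ) : ι → ℝ :=
  fun i => sin (2 * π / T * κ i * t)

section Dither

variable {ι : Type*} {T : ℝ} {κ : ι → ℕ}

@[fun_prop]
theorem continuous_dither : Continuous (dither T κ) :=
  continuous_pi fun _ => by unfold dither; fun_prop

theorem abs_average_mul_dither_le {g : ℝ → ℝ} {M : ℝ} (hT : 0 < T) (hg : ∀ t, |g t| ≤ M)
    (n : ι) : |1 / T * ∫ t in (0 : ℝ)..T, g t * dither T κ t n| ≤ M := by
  have hpointwise : ∀ t ∈ Set.uIoc 0 T, ‖g t * dither T κ t n‖ ≤ M := fun t _ => by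
    rw [norm_mul, norm_eq_abs]
    exact (mul_le_of_le_one_right (abs_nonneg _) (abs_sin_le_one _)).trans (hg t)
  have h := norm_integral_le_of_norm_le_const hpointwise
  rw [sub_zero, abs_of_pos hT] at h
  rw [abs_mul, abs_of_pos (by positivity), ← norm_eq_abs]
  calc 1 / T * ‖∫ t in (0 : ℝ)..T, g t * dither T κ t n‖ ≤ 1 / T * (M * T) := by gcongr
    _ = M := by field_simp

variable [Fintype ι]

theorem norm_dither_le_one (t : ℝ) : ‖dither T κ t‖ ≤ 1 :=
  pi_norm_le_iff_of_nonneg zero_le_one |>.mpr fun _ => abs_sin_le_one _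

variable [DecidableEq ι]

theorem integral_map_dither_mul_dither (L : (ι → ℝ) →ₗ[ℝ] ℝ) (hT : T ≠ 0)
    (hκ : Function.Injective κ) {n : ι} (hn : 0 < κ n) :
    ∫ t in (0 : ℝ)..T, L (dither T κ t) * dither T κ t n = T / 2 * L (Pi.single n 1) := by
  have hexpand : ∀ t, L (dither T κ t) * dither T κ t n =
      ∑ i, L (Pi.single i 1) * (dither T κ t i * dither T κ t n) := fun t => by
    have hL : L (dither T κ t) = ∑ i, dither T κ t i * L (Pi.single i 1) := by
      conv_lhs => rw [pi_eq_sum_univ' (dither T κ t)]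
      simp only [map_sum, map_smul, smul_eq_mul]
    rw [hL, Finset.sum_mul]
    exact Finset.sum_congr rfl fun i _ => by ring
  simp_rw [hexpand]
  rw [integral_finsetSum fun i _ => Continuous.intervalIntegrable (by fun_prop) _ _]
  simp only [integral_const_mul, dither, integral_sin_mul_sin_two_pi_div hT _ hn, hκ.eq_iff,
    mul_ite, mul_zero, Finset.sum_ite_eq', Finset.mem_univ, if_true]
  ring

theorem average_affine_mul_dither_eq (L : (ι → ℝ) →ₗ[ℝ] ℝ) (c : ℝ) (hT : T ≠ 0)
    (hκ : Function.Injective κ) {n : ι} (hn : 0 < κ n) {a : ℝ} (ha : a ≠ 0) :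
    1 / T * ∫ t in (0 : ℝ)..T, 2 / a * (c + L (a • dither T κ t)) * dither T κ t n =
      L (Pi.single n 1) := by
  have hsplit : ∀ t, 2 / a * (c + L (a • dither T κ t)) * dither T κ t n =
      2 / a * c * dither T κ t n + 2 * (L (dither T κ t) * dither T κ t n) := fun t => by
    rw [map_smul, smul_eq_mul]
    field_simp
  simp_rw [hsplit]
  rw [integral_add (Continuous.intervalIntegrable (by fun_prop) _ _)
      (Continuous.intervalIntegrable (by fun_prop) _ _), integral_const_mul, integral_const_mul,
    integral_map_dither_mul_dither L hT hκ hn]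
  simp only [dither]
  rw [integral_sin_two_pi_div_mul_eq_zero hT (κ n)]
  field_simp
  ring

end Dither

theorem stmt19_general (N : ℕ) (T : ℝ) (hT : 0 < T) (κ : Fin N → ℕ)
    (hκpos : ∀ i, 0 < κ i) (hκinj : Function.Injective κ)
    (f : (Fin N → ℝ) → ℝ) (x : Fin N → ℝ) (r C : ℝ) (hC : 0 ≤ C)
    (hf : ContDiffOn ℝ 2 f (Metric.ball x r))
    (hbound : ∀ y ∈ Metric.ball x r, ‖iteratedFDeriv ℝ 2 f y‖ ≤ C) :
    ∃ C' : ℝ, 0 ≤ C' ∧ ∀ a : ℝ, 0 < a → a < r → ∀ n : Fin N,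
      |(1 / T) * (∫ t in (0 : ℝ)..T,
          (2 / a) * f (fun i => x i + a * Real.sin ((2 * Real.pi / T) * κ i * t)) *
            Real.sin ((2 * Real.pi / T) * κ n * t))
        - fderiv ℝ f x (Pi.single n 1)| ≤ C' * a := by
  refine ⟨2 * C, by positivity, fun a ha har n => ?_⟩
  have hprobe : ∀ t, ‖a • dither T κ t‖ ≤ a := fun t => by
    rw [norm_smul, norm_of_nonneg ha.le]
    exact mul_le_of_le_one_right ha.le (norm_dither_le_one t)
  have hmem : ∀ t, x + a • dither T κ t ∈ Metric.ball x r := fun t => by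
    simpa [dist_eq_norm] using (hprobe t).trans_lt har
  have hcont : Continuous fun t => 2 / a * f (x + a • dither T κ t) * dither T κ t n :=
    (continuous_const.mul (hf.continuousOn.comp_continuous (by fun_prop) hmem)).mul (by fun_prop)
  have hremainder : ∀ t,
      |2 / a * (f (x + a • dither T κ t) - f x - fderiv ℝ f x (a • dither T κ t))| ≤
        2 / a * (C * a ^ 2) := fun t => by
    rw [abs_mul, abs_of_pos (by positivity), ← norm_eq_abs]
    gcongr
    exact (norm_add_sub_sub_fderiv_le_of_mem_ball hf hbound (hmem t)).trans
      (by gcongr; exact hprobe t)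
  have haffine := average_affine_mul_dither_eq (fderiv ℝ f x : (Fin N → ℝ) →ₗ[ℝ] ℝ) (f x)
    hT.ne' hκinj (hκpos n) ha.ne'
  rw [ContinuousLinearMap.coe_coe] at haffine
  show |1 / T * (∫ t in (0 : ℝ)..T, 2 / a * f (x + a • dither T κ t) * dither T κ t n) - _| ≤ _
  rw [← haffine, ← mul_sub, ← integral_sub (hcont.intervalIntegrable _ _)
    (Continuous.intervalIntegrable (by fun_prop) _ _)]
  convert (abs_average_mul_dither_le hT hremainder n).trans_eq (by field_simp : _ = 2 * C * a)
    using 3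
  exact integral_congr fun t _ => by ring

/-- fundamental averaging identity of extremum seeking for a C²
map with bounded second derivatives on a ball around `x`: the sinusoidal
average recovers each partial derivative up to an `O(a)` error whose constant
depends only on the second-derivative bound. -/
theorem stmt19 (N : ℕ) (T : ℝ) (hT : 0 < T) (κ : Fin N → ℕ)
    (hκpos : ∀ i, 0 < κ i) (hκinj : Function.Injective κ)
    (f : (Fin N → ℝ) → ℝ) (x : Fin N → ℝ) (r C : ℝ) (hr : 0 < r) (hC : 0 ≤ C)
    (hf : ContDiffOn ℝ 2 f (Metric.ball x r))
    (hbound : ∀ y ∈ Metric.ball x r, ‖iteratedFDeriv ℝ 2 f y‖ ≤ C) :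
    ∃ C' : ℝ, 0 ≤ C' ∧ ∀ a : ℝ, 0 < a → a < r → ∀ n : Fin N,
      |(1 / T) * (∫ t in (0 : ℝ)..T,
          (2 / a) * f (fun i => x i + a * Real.sin ((2 * Real.pi / T) * κ i * t)) *
            Real.sin ((2 * Real.pi / T) * κ n * t))
        - fderiv ℝ f x (Pi.single n 1)| ≤ C' * a :=
  stmt19_general N T hT κ hκpos hκinj f x r C hC hf hbound
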